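/- arXiv:2501.13410 — 7 statements merged into one kernel-verified Lean document; each statement's English description precedes it below -/
import Mathlib

section
/- Let S be a finite nonempty set, 𝒫 a nonempty finite (or Hausdorff-compact) collection of nonempty compact subsets of Δ(S), and define U : ℝ^S → ℝ by U(φ) = min{ max_{P∈𝒫} min_{p∈P} E_p[φ], min_{P∈𝒫} max_{p∈P} E_p[φ] }. Then U satisfies the weak uncertainty aversion inequality: for all φ, ψ ∈ ℝ^S, all α ∈ (0,1), and all c ∈ ℝ, if U(φ) = U(ψ) and αφ + (1−α)ψ = c·1 (a constant vector), then c ≥ U(φ). -/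
open Set

noncomputable section

def simplex (S : Type*) [Fintype S] : Set (S → ℝ) :=
  {p | (∀ s, 0 ≤ p s) ∧ ∑ s, p s = 1}

def expE {S : Type*} [Fintype S] (p φ : S → ℝ) : ℝ := ∑ s, p s * φ s

def minEU {S : Type*} [Fintype S] (P : Set (S → ℝ)) (φ : S → ℝ) : ℝ :=
  sInf ((fun p => expE p φ) '' P)

def maxEU {S : Type*} [Fintype S] (P : Set (S → ℝ)) (φ : S → ℝ) : ℝ :=
  sSup ((fun p => expE p φ) '' P)

def maxmin {S : Type*} [Fintype S] (C : Set (Set (S → ℝ))) (φ : S → ℝ) : ℝ :=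
  sSup ((fun P => minEU P φ) '' C)

def minmax {S : Type*} [Fintype S] (C : Set (Set (S → ℝ))) (φ : S → ℝ) : ℝ :=
  sInf ((fun P => maxEU P φ) '' C)

/-- the cautious dual-self functional satisfies the weak
uncertainty aversion inequality. -/
theorem stmt3 {S : Type*} [Fintype S] [Nonempty S]
    (C : Set (Set (S → ℝ))) (hne : C.Nonempty) (hfin : C.Finite)
    (hmem : ∀ P ∈ C, P.Nonempty ∧ IsCompact P ∧ P ⊆ simplex S)
    (φ ψ : S → ℝ) (α c : ℝ) (h0 : 0 < α) (h1 : α < 1)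
    (hU : min (maxmin C φ) (minmax C φ) = min (maxmin C ψ) (minmax C ψ))
    (hhedge : ∀ s, α * φ s + (1 - α) * ψ s = c) :
    c ≥ min (maxmin C φ) (minmax C φ) := by
  obtain ⟨P1, hP1C, hP1max⟩ : ∃ P ∈ C, minEU P ψ = maxmin C ψ := by
    obtain ⟨P, hP, h⟩ := (Set.mem_image _ _ _).1
      ((hne.image (fun P => minEU P ψ)).csSup_mem (hfin.image _))
    exact ⟨P, hP, h⟩
  obtain ⟨hP1ne, hP1cpt, hP1sub⟩ := hmem P1 hP1C
  have hcont : ∀ χ : S → ℝ, Continuous fun p : S → ℝ => expE p χ := by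
    intro χ
    unfold expE
    exact continuous_finset_sum _ fun s _ => (continuous_apply s).mul continuous_const
  obtain ⟨p, hpP1, hpeq⟩ : ∃ p ∈ P1, expE p φ = maxEU P1 φ := by
    obtain ⟨p, hp, h⟩ := (Set.mem_image _ _ _).1
      ((hP1cpt.image (hcont φ)).sSup_mem (hP1ne.image _))
    exact ⟨p, hp, h⟩
  have h2 : minmax C φ ≤ maxEU P1 φ :=
    csInf_le ((hfin.image _).bddBelow) ⟨P1, hP1C, rfl⟩
  have h3 : minEU P1 ψ ≤ expE p ψ :=
    csInf_le ((hP1cpt.image (hcont ψ)).bddBelow) ⟨p, hpP1, rfl⟩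
  have hpsimp := hP1sub hpP1
  have hsum : ∑ s, p s = 1 := hpsimp.2
  have hc : α * expE p φ + (1 - α) * expE p ψ = c := by
    unfold expE
    rw [Finset.mul_sum, Finset.mul_sum, ← Finset.sum_add_distrib]
    have hcongr : ∀ s ∈ Finset.univ, α * (p s * φ s) + (1 - α) * (p s * ψ s) = p s * c :=
      fun s _ => by
        rw [← hhedge s]; ring
    rw [Finset.sum_congr rfl hcongr, ← Finset.sum_mul, hsum, one_mul]
  have hUφ : min (maxmin C φ) (minmax C φ) ≤ expE p φ :=
    le_trans (min_le_right _ _) (hpeq ▸ h2)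
  have hUψ : min (maxmin C φ) (minmax C φ) ≤ expE p ψ := by
    rw [hU]
    exact le_trans (min_le_left _ _) (hP1max ▸ h3)
  nlinarith [hUφ, hUψ, hc]
end
end

section
/- Let S be a finite nonempty set and let I : ℝ^S → ℝ be positively homogeneous (I(λφ)=λI(φ) for λ>0) and constant-additive (I(φ+c·1)=I(φ)+c for all c∈ℝ). Then the following are equivalent: (i) for all φ, ψ ∈ ℝ^S, α ∈ (0,1), and c ∈ ℝ, if I(φ)=I(ψ) and αφ+(1−α)ψ = c·1, then c ≥ I(φ); (ii) for all φ ∈ ℝ^S, I(φ) + I(−φ) ≤ 0. -/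
open Set

noncomputable section

/-- for positively homogeneous constant-additive functionals,
weak uncertainty aversion is equivalent to I(φ) + I(−φ) ≤ 0. -/
theorem stmt4 {S : Type*} [Fintype S] [Nonempty S] (I : (S → ℝ) → ℝ)
    (hpos : ∀ (φ : S → ℝ) (l : ℝ), 0 < l → I (fun s => l * φ s) = l * I φ)
    (hadd : ∀ (φ : S → ℝ) (c : ℝ), I (fun s => φ s + c) = I φ + c) :
    (∀ (φ ψ : S → ℝ) (α c : ℝ), 0 < α → α < 1 → I φ = I ψ →
        (∀ s, α * φ s + (1 - α) * ψ s = c) → c ≥ I φ)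
      ↔ (∀ φ : S → ℝ, I φ + I (fun s => -φ s) ≤ 0) := by
  constructor
  · intro h φ
    set d : ℝ := I φ - I (fun s => -φ s) with hd
    have hψ : I (fun s => -φ s + d) = I φ := by
      rw [hadd]; ring
    have key := h φ (fun s => -φ s + d) (1/2) (d/2) (by norm_num) (by norm_num)
      hψ.symm (fun s => by ring)
    -- key : d/2 ≥ I φ
    linarith [key]
  · intro h φ ψ α c hα0 hα1 hIeq hc
    have h1α : (0:ℝ) < 1 - α := by linarith
    have hψeq : ψ = fun s => (α/(1-α)) * (-φ s) + c/(1-α) := by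
      funext s
      have := hc s
      field_simp
      nlinarith [hc s]
    have : I ψ = (α/(1-α)) * I (fun s => -φ s) + c/(1-α) := by
      rw [hψeq, hadd, hpos _ _ (by positivity)]
    have hle := h φ
    have hαpos : (0:ℝ) < α/(1-α) := by positivity
    -- I φ = I ψ = (α/(1-α)) I(-φ) + c/(1-α), and I(-φ) ≤ -I φ
    have : I φ = (α/(1-α)) * I (fun s => -φ s) + c/(1-α) := by rw [hIeq, this]
    have h2 : I (fun s => -φ s) ≤ -I φ := by linarith
    have hC : (1-α) * I φ = α * I (fun s => -φ s) + c := by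
      have h3 := congrArg (fun x => x * (1-α)) this
      field_simp at h3
      linarith
    nlinarith [mul_le_mul_of_nonneg_left h2 hα0.le]
end
end

section
/- Let S be a finite nonempty set, 𝒫 a nonempty finite (or Hausdorff-compact) collection of nonempty compact subsets of Δ(S), and define I(φ) = max_{P∈𝒫} min_{p∈P} E_p[φ]. Suppose I satisfies: for all φ, ψ ∈ ℝ^S, α ∈ (0,1), c ∈ ℝ with I(φ)=I(ψ) and αφ+(1−α)ψ = c·1, one has c ≥ I(φ). Then for every φ ∈ ℝ^S, max_{P∈𝒫} min_{p∈P} E_p[φ] ≤ min_{P∈𝒫} max_{p∈P} E_p[φ], and hence I(φ) = min{ max_{P∈𝒫} min_{p∈P} E_p[φ], min_{P∈𝒫} max_{p∈P} E_p[φ] }. -/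
open Set

noncomputable section

lemma refl_inf (k : ℝ) {A : Set ℝ} (hA : A.Nonempty) (hb : BddAbove A) :
    sInf ((fun x => k - x) '' A) = k - sSup A := by
  have h := isLUB_csSup hA hb
  apply IsGLB.csInf_eq _ (hA.image _)
  constructor
  · rintro y ⟨a, ha, rfl⟩; have := h.1 ha; simp; linarith
  · intro y hy
    have hub : k - y ∈ upperBounds A := by
      intro a ha
      have := hy ⟨a, ha, rfl⟩
      simp at this ⊢; linarith
    have := h.2 hub; linarith

lemma refl_sup (k : ℝ) {A : Set ℝ} (hA : A.Nonempty) (hb : BddBelow A) :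
    sSup ((fun x => k - x) '' A) = k - sInf A := by
  have h := isGLB_csInf hA hb
  apply IsLUB.csSup_eq _ (hA.image _)
  constructor
  · rintro y ⟨a, ha, rfl⟩; have := h.1 ha; simp; linarith
  · intro y hy
    have hlb : k - y ∈ lowerBounds A := by
      intro a ha
      have := hy ⟨a, ha, rfl⟩
      simp at this ⊢; linarith
    have := h.2 hlb; linarith

lemma expE_cont {S : Type*} [Fintype S] (φ : S → ℝ) :
    Continuous (fun p : S → ℝ => expE p φ) := by
  unfold expE
  exact continuous_finset_sum _ fun s _ => (continuous_apply s).mul continuous_const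

/-- if the max-of-min functional satisfies weak uncertainty
aversion then maxmin ≤ minmax, hence it equals the cautious dual-self form. -/
theorem stmt5 {S : Type*} [Fintype S] [Nonempty S]
    (C : Set (Set (S → ℝ))) (hne : C.Nonempty) (hfin : C.Finite)
    (hmem : ∀ P ∈ C, P.Nonempty ∧ IsCompact P ∧ P ⊆ simplex S)
    (hwua : ∀ (φ ψ : S → ℝ) (α c : ℝ), 0 < α → α < 1 →
        maxmin C φ = maxmin C ψ →
        (∀ s, α * φ s + (1 - α) * ψ s = c) → c ≥ maxmin C φ) :
    ∀ φ : S → ℝ, maxmin C φ ≤ minmax C φ ∧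
      maxmin C φ = min (maxmin C φ) (minmax C φ) := by
  intro φ
  set k : ℝ := maxmin C φ + minmax C φ with hk
  set ψ : S → ℝ := fun s => k - φ s with hψ
  -- For each P ∈ C, minEU P ψ = k - maxEU P φ
  have hmin : ∀ P ∈ C, minEU P ψ = k - maxEU P φ := by
    intro P hP
    obtain ⟨hPne, hPc, hPs⟩ := hmem P hP
    have himg : (fun p => expE p ψ) '' P = (fun x => k - x) '' ((fun p => expE p φ) '' P) := by
      rw [Set.image_image]
      apply Set.image_congr
      intro p hp
      have hsum : ∑ s, p s = 1 := (hPs hp).2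
      simp only [hψ, expE, mul_sub, Finset.sum_sub_distrib, ← Finset.sum_mul, hsum, one_mul]
    have hcomp : IsCompact ((fun p => expE p φ) '' P) := hPc.image (expE_cont φ)
    unfold minEU maxEU
    rw [himg, refl_inf _ (hPne.image _) hcomp.bddAbove]
  -- maxmin C ψ = k - minmax C φ = maxmin C φ
  have hmm : maxmin C ψ = maxmin C φ := by
    have heq : maxmin C ψ = k - minmax C φ := by
      unfold maxmin minmax
      have himg2 : (fun P => minEU P ψ) '' C = (fun x => k - x) '' ((fun P => maxEU P φ) '' C) := by
        rw [Set.image_image]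
        exact Set.image_congr hmin
      rw [himg2, refl_sup _ (hne.image _) ((hfin.image _).bddBelow)]
    rw [heq, hk]; ring
  have hconst : ∀ s, (1/2 : ℝ) * φ s + (1 - 1/2) * ψ s = k / 2 := by
    intro s; simp only [hψ]; ring
  have := hwua φ ψ (1/2) (k/2) (by norm_num) (by norm_num) hmm.symm hconst
  have hle : maxmin C φ ≤ minmax C φ := by
    rw [hk] at this; linarith
  exact ⟨hle, (min_eq_left hle).symm⟩
end
end

section
/- Let S be a finite nonempty set, P a nonempty compact subset of Δ(S), and a ∈ [1/2, 1]. Define U : ℝ^S → ℝ by U(φ) = a·min_{p∈P} E_p[φ] + (1−a)·max_{p∈P} E_p[φ]. Then for all φ, ψ ∈ ℝ^S, α ∈ (0,1), and c ∈ ℝ, if U(φ) = U(ψ) and αφ + (1−α)ψ = c·1, then c ≥ U(φ). -/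
open Set

noncomputable section

/-!
Every prior `p ∈ P` turns the hedge `α φ + (1 - α) ψ = c` into `α E_p φ + (1 - α) E_p ψ = c`,
so on `P` the expectation of `ψ` is a decreasing affine function of that of `φ`: the prior that
is best for `φ` is worst for `ψ` and vice versa. Hence `(1 - α) U(ψ) ≤ c - α Ũ(φ)`, where `Ũ`
swaps the weights `a` and `1 - a`. For `a ≥ 1/2` we have `U ≤ Ũ`, and `U(φ) = U(ψ)` then
gives `U(φ) ≤ c`.
-/

section ExpectedUtility

variable {S : Type*} [Fintype S]

theorem mul_expE_add_mul_expE_eq_of_forall {p φ ψ : S → ℝ} (hp : p ∈ simplex S) {α β c : ℝ}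
    (h : ∀ s, α * φ s + β * ψ s = c) : α * expE p φ + β * expE p ψ = c := by
  calc α * expE p φ + β * expE p ψ = ∑ s, p s * (α * φ s + β * ψ s) := by
        simp only [expE, Finset.mul_sum, ← Finset.sum_add_distrib]
        exact Finset.sum_congr rfl fun s _ => by ring
    _ = c := by simp only [h, ← Finset.sum_mul, hp.2, one_mul]

theorem continuous_expE_left (φ : S → ℝ) : Continuous fun p : S → ℝ => expE p φ :=
  continuous_finsetSum _ fun s _ => (continuous_apply s).mul continuous_const

variable {P : Set (S → ℝ)}

theorem IsCompact.minEU_le_expE (hP : IsCompact P) (φ : S → ℝ) {p : S → ℝ} (hp : p ∈ P) :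
    minEU P φ ≤ expE p φ :=
  csInf_le ((hP.image (continuous_expE_left φ)).bddBelow) (mem_image_of_mem _ hp)

theorem IsCompact.expE_le_maxEU (hP : IsCompact P) (φ : S → ℝ) {p : S → ℝ} (hp : p ∈ P) :
    expE p φ ≤ maxEU P φ :=
  le_csSup ((hP.image (continuous_expE_left φ)).bddAbove) (mem_image_of_mem _ hp)

theorem IsCompact.exists_expE_eq_minEU (hP : IsCompact P) (hne : P.Nonempty) (φ : S → ℝ) :
    ∃ p ∈ P, expE p φ = minEU P φ :=
  (hP.image (continuous_expE_left φ)).sInf_mem (hne.image _)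

theorem IsCompact.exists_expE_eq_maxEU (hP : IsCompact P) (hne : P.Nonempty) (φ : S → ℝ) :
    ∃ p ∈ P, expE p φ = maxEU P φ :=
  (hP.image (continuous_expE_left φ)).sSup_mem (hne.image _)

theorem IsCompact.minEU_le_maxEU (hP : IsCompact P) (hne : P.Nonempty) (φ : S → ℝ) :
    minEU P φ ≤ maxEU P φ := by
  obtain ⟨p, hp, hp_eq⟩ := hP.exists_expE_eq_minEU hne φ
  exact hp_eq ▸ hP.expE_le_maxEU φ hp

variable {φ ψ : S → ℝ} {α β c : ℝ}

theorem IsCompact.mul_minEU_le_of_hedge (hP : IsCompact P) (hne : P.Nonempty) (hβ : 0 ≤ β)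
    (hedge : ∀ p ∈ P, α * expE p φ + β * expE p ψ = c) :
    β * minEU P ψ ≤ c - α * maxEU P φ := by
  obtain ⟨p, hp, hp_eq⟩ := hP.exists_expE_eq_maxEU hne φ
  have := mul_le_mul_of_nonneg_left (hP.minEU_le_expE ψ hp) hβ
  rw [← hp_eq]
  linarith [hedge p hp]

theorem IsCompact.mul_maxEU_le_of_hedge (hP : IsCompact P) (hne : P.Nonempty) (hα : 0 ≤ α)
    (hedge : ∀ p ∈ P, α * expE p φ + β * expE p ψ = c) :
    β * maxEU P ψ ≤ c - α * minEU P φ := by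
  obtain ⟨q, hq, hq_eq⟩ := hP.exists_expE_eq_maxEU hne ψ
  have := mul_le_mul_of_nonneg_left (hP.minEU_le_expE φ hq) hα
  rw [← hq_eq]
  linarith [hedge q hq]

end ExpectedUtility

theorem stmt8_general {S : Type*} [Fintype S]
    (P : Set (S → ℝ)) (hne : P.Nonempty) (hcomp : IsCompact P)
    (hsub : P ⊆ simplex S) (a : ℝ) (ha : a ∈ Set.Icc (1/2 : ℝ) 1)
    (φ ψ : S → ℝ) (α c : ℝ) (h0 : 0 < α) (h1 : α < 1)
    (hU : a * minEU P φ + (1 - a) * maxEU P φ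
        = a * minEU P ψ + (1 - a) * maxEU P ψ)
    (hhedge : ∀ s, α * φ s + (1 - α) * ψ s = c) :
    c ≥ a * minEU P φ + (1 - a) * maxEU P φ := by
  obtain ⟨ha_half, ha_one⟩ := ha
  have hedge : ∀ p ∈ P, α * expE p φ + (1 - α) * expE p ψ = c := fun p hp =>
    mul_expE_add_mul_expE_eq_of_forall (hsub hp) hhedge
  have hmin := mul_le_mul_of_nonneg_left
    (hcomp.mul_minEU_le_of_hedge hne (by linarith) hedge) (by linarith : 0 ≤ a)
  have hmax := mul_le_mul_of_nonneg_left
    (hcomp.mul_maxEU_le_of_hedge hne h0.le hedge) (by linarith : 0 ≤ 1 - a)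
  have hspread : 0 ≤ (2 * a - 1) * (maxEU P φ - minEU P φ) :=
    mul_nonneg (by linarith) (sub_nonneg.mpr (hcomp.minEU_le_maxEU hne φ))
  linear_combination hmin + hmax + α * hspread + (1 - α) * hU

/-- the α-maxmin functional with weight a ≥ 1/2 on the worst case
satisfies the weak uncertainty aversion inequality. -/
theorem stmt8 {S : Type*} [Fintype S] [Nonempty S]
    (P : Set (S → ℝ)) (hne : P.Nonempty) (hcomp : IsCompact P)
    (hsub : P ⊆ simplex S) (a : ℝ) (ha : a ∈ Set.Icc (1/2 : ℝ) 1)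
    (φ ψ : S → ℝ) (α c : ℝ) (h0 : 0 < α) (h1 : α < 1)
    (hU : a * minEU P φ + (1 - a) * maxEU P φ
        = a * minEU P ψ + (1 - a) * maxEU P ψ)
    (hhedge : ∀ s, α * φ s + (1 - α) * ψ s = c) :
    c ≥ a * minEU P φ + (1 - a) * maxEU P φ :=
  stmt8_general P hne hcomp hsub a ha φ ψ α c h0 h1 hU hhedge
end
end

section
/- Let X be a nonempty set, v a capacity on X with dual v*, and define for each bounded κ : X → ℝ the value W(κ) = min{ ∫κ dv, ∫κ dv* }. Assume the Choquet integral satisfies, for all bounded κ, all c ∈ ℝ and λ > 0: ∫(λκ + c) dv = λ∫κ dv + c (constant-additivity and positive homogeneity, which hold by definition), and ∫(−κ)dv = −∫κ dv*. Then W satisfies: for all bounded κ, ρ, all α ∈ (0,1) and c ∈ ℝ, if W(κ) = W(ρ) and ακ + (1−α)ρ is the constant function c, then c ≥ W(κ). -/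
open Set MeasureTheory

noncomputable section

def IsCapacity {X : Type*} (v : Set X → ℝ) : Prop :=
  v ∅ = 0 ∧ v Set.univ = 1 ∧ ∀ A B : Set X, A ⊆ B → v A ≤ v B

def dualCap {X : Type*} (v : Set X → ℝ) : Set X → ℝ := fun A => 1 - v Aᶜ

def choquet {X : Type*} (v : Set X → ℝ) (κ : X → ℝ) : ℝ :=
  (∫ β in Set.Iio (0 : ℝ), (v {x | β ≤ κ x} - 1)) +
    ∫ β in Set.Ioi (0 : ℝ), v {x | β ≤ κ x}

def Bdd {X : Type*} (κ : X → ℝ) : Prop := ∃ M : ℝ, ∀ x, |κ x| ≤ M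

/-!
Since `α κ + (1 - α) ρ = c`, the act `ρ` is the positive affine image `l (-κ) + c'` of `-κ`,
with `l = α / (1 - α)`. Translation invariance, homogeneity and duality then give
`∫ρ dv = -l ∫κ dv* + c'` and `∫ρ dv* = -l ∫κ dv + c'`, so `W(ρ) = -l max(∫κ dv, ∫κ dv*) + c'`.
Clearing denominators, `W(κ) = W(ρ)` says that `c` is the convex combination
`(1 - α) min + α max` of the two integrals of `κ`, which is at least their minimum.
-/

theorem IsCapacity.dualCap {X : Type*} {v : Set X → ℝ} (hv : IsCapacity v) :
    IsCapacity (dualCap v) := by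
  refine ⟨by simp [_root_.dualCap, hv.2.1], by simp [_root_.dualCap, hv.1], fun A B hAB => ?_⟩
  have := hv.2.2 Bᶜ Aᶜ (compl_subset_compl.mpr hAB)
  simp only [_root_.dualCap]
  linarith

theorem dualCap_dualCap {X : Type*} (v : Set X → ℝ) : dualCap (dualCap v) = v := by
  funext A
  simp [dualCap]

theorem Bdd.neg {X : Type*} {κ : X → ℝ} (hκ : Bdd κ) : Bdd fun x => -κ x := by
  obtain ⟨M, hM⟩ := hκ
  exact ⟨M, fun x => by simpa using hM x⟩

theorem min_mul_neg_add {l : ℝ} (hl : 0 ≤ l) (a b c : ℝ) :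
    min (l * -b + c) (l * -a + c) = l * -max a b + c := by
  rw [min_add_add_right, ← mul_min_of_nonneg _ _ hl, min_neg_neg, max_comm]

theorem stmt13_general {X : Type*} (v : Set X → ℝ) (hv : IsCapacity v)
    (hhom : ∀ w : Set X → ℝ, IsCapacity w → ∀ κ : X → ℝ, Bdd κ →
        ∀ l c : ℝ, 0 < l →
          choquet w (fun x => l * κ x + c) = l * choquet w κ + c)
    (hdual : ∀ w : Set X → ℝ, IsCapacity w → ∀ κ : X → ℝ, Bdd κ →
        choquet w (fun x => -κ x) = - choquet (dualCap w) κ) :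
    ∀ κ ρ : X → ℝ, Bdd κ → Bdd ρ → ∀ α c : ℝ, 0 < α → α < 1 →
      min (choquet v κ) (choquet (dualCap v) κ)
          = min (choquet v ρ) (choquet (dualCap v) ρ) →
      (∀ x, α * κ x + (1 - α) * ρ x = c) →
      c ≥ min (choquet v κ) (choquet (dualCap v) κ) := by
  intro κ ρ hκ _ α c hα hα1 hW hmix
  have hβ : 0 < 1 - α := by linarith
  have hl : 0 < α / (1 - α) := div_pos hα hβ
  have hρ : ρ = fun x => α / (1 - α) * -κ x + c / (1 - α) := by
    funext x
    field_simp
    linarith [hmix x]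
  have hv' := hv.dualCap
  rw [hρ, hhom v hv _ hκ.neg _ _ hl, hhom _ hv' _ hκ.neg _ _ hl, hdual v hv κ hκ,
    hdual _ hv' κ hκ, dualCap_dualCap, min_mul_neg_add hl.le] at hW
  set a := choquet v κ
  set b := choquet (dualCap v) κ
  have hc : c = (1 - α) * min a b + α * max a b := by
    rw [hW]
    field_simp
    ring
  have hspread := mul_le_mul_of_nonneg_left (min_le_max (a := a) (b := b)) hα.le
  linarith

/-- the functional W(κ) = min{∫κ dv, ∫κ dv*} satisfies the weak
uncertainty aversion inequality. -/
theorem stmt13 {X : Type*} [Nonempty X] (v : Set X → ℝ) (hv : IsCapacity v)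
    (hhom : ∀ w : Set X → ℝ, IsCapacity w → ∀ κ : X → ℝ, Bdd κ →
        ∀ l c : ℝ, 0 < l →
          choquet w (fun x => l * κ x + c) = l * choquet w κ + c)
    (hdual : ∀ w : Set X → ℝ, IsCapacity w → ∀ κ : X → ℝ, Bdd κ →
        choquet w (fun x => -κ x) = - choquet (dualCap w) κ) :
    ∀ κ ρ : X → ℝ, Bdd κ → Bdd ρ → ∀ α c : ℝ, 0 < α → α < 1 →
      min (choquet v κ) (choquet (dualCap v) κ)
          = min (choquet v ρ) (choquet (dualCap v) ρ) →
      (∀ x, α * κ x + (1 - α) * ρ x = c) →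
      c ≥ min (choquet v κ) (choquet (dualCap v) κ) :=
  stmt13_general v hv hhom hdual
end
end

section
/- Let S be a finite nonempty set. For φ ∈ ℝ^S and λ ∈ ℝ, let H_{φ,λ} = { p ∈ Δ(S) : E_p[φ] ≥ λ }. Let 𝒫 be a nonempty Hausdorff-compact collection of nonempty compact convex subsets of Δ(S), and define its half-space closure as the Hausdorff closure of { H : H is a nonempty closed half-space of Δ(S) and P ⊆ H for some P ∈ 𝒫 }. Then for all φ ∈ ℝ^S and λ ∈ ℝ with H_{φ,λ} nonempty: H_{φ,λ} belongs to the half-space closure of 𝒫 if and only if max_{P∈𝒫} min_{p∈P} E_p[φ] ≥ λ, where membership P ⊆ H_{φ,λ} for some P ∈ 𝒫 is taken before closure and may be relaxed up to Hausdorff limits. -/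
open Set

noncomputable section

abbrev Dl (S : Type*) [Fintype S] := {p : S → ℝ // p ∈ simplex S}

def halfSpace {S : Type*} [Fintype S] (ψ : S → ℝ) (μ : ℝ) : Set (Dl S) :=
  {p : Dl S | μ ≤ expE p.1 ψ}

/-- The collection of closed half-spaces of Δ(S) containing some member of C. -/
def hsColl {S : Type*} [Fintype S]
    (C : Set (TopologicalSpace.NonemptyCompacts (Dl S))) :
    Set (TopologicalSpace.NonemptyCompacts (Dl S)) :=
  {H | (∃ ψ μ, (H : Set (Dl S)) = halfSpace ψ μ) ∧
        ∃ P ∈ C, (P : Set (Dl S)) ⊆ (H : Set (Dl S))}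

/-!
Since `𝒫` is compact and `P ⊆ H` is a closed relation on nonempty compacts (it says
`P ⊔ H = H`), the set of `H` containing some member of `𝒫` is closed; so a half-space in the
closure contains some `P ∈ 𝒫`, whence `λ ≤ min_P E[φ] ≤ max min`. Conversely, if
`λ ≤ max min` then every `H_{φ,λ-δ}` with `δ > 0` contains some `P ∈ 𝒫`, and by compactness
of `Δ(S)` these half-spaces converge to `H_{φ,λ}` in the Hausdorff metric as `δ → 0`.
-/

open Metric TopologicalSpace

instance (S : Type*) [Fintype S] : CompactSpace (Dl S) :=
  isCompact_iff_compactSpace.mp (isCompact_stdSimplex ℝ S)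

theorem continuous_expE {S : Type*} [Fintype S] (φ : S → ℝ) :
    Continuous fun p : Dl S => expE p.1 φ :=
  continuous_finsetSum _ fun s _ =>
    ((continuous_apply s).comp continuous_subtype_val).mul continuous_const

theorem isClosed_halfSpace {S : Type*} [Fintype S] (φ : S → ℝ) (l : ℝ) :
    IsClosed (halfSpace φ l) :=
  isClosed_le continuous_const (continuous_expE φ)

theorem halfSpace_anti {S : Type*} [Fintype S] (φ : S → ℝ) : Antitone (halfSpace φ) :=
  fun _ _ hll' _ hp => hll'.trans hp

theorem subset_halfSpace_iff_le_sInf {S : Type*} [Fintype S] (P : NonemptyCompacts (Dl S))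
    (φ : S → ℝ) (l : ℝ) :
    (P : Set (Dl S)) ⊆ halfSpace φ l ↔ l ≤ sInf ((fun p : Dl S => expE p.1 φ) '' P) := by
  rw [le_csInf_iff (P.isCompact.image (continuous_expE φ)).bddBelow (P.nonempty.image _),
    forall_mem_image]
  rfl

theorem bddAbove_image_sInf_expE {S : Type*} [Fintype S]
    (C : Set (NonemptyCompacts (Dl S))) (φ : S → ℝ) :
    BddAbove ((fun P : NonemptyCompacts (Dl S) =>
      sInf ((fun p : Dl S => expE p.1 φ) '' (P : Set (Dl S)))) '' C) := by
  obtain ⟨B, hB⟩ := (isCompact_range (continuous_expE φ)).bddAbove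
  refine ⟨B, forall_mem_image.2 fun P _ => ?_⟩
  obtain ⟨p, hp⟩ := P.nonempty
  exact (csInf_le (P.isCompact.image (continuous_expE φ)).bddBelow (mem_image_of_mem _ hp)).trans
    (hB (mem_range_self p))

def halfSpaceNonemptyCompacts {S : Type*} [Fintype S] (φ : S → ℝ) (l : ℝ)
    (h : (halfSpace φ l).Nonempty) : NonemptyCompacts (Dl S) :=
  ⟨⟨halfSpace φ l, (isClosed_halfSpace φ l).isCompact⟩, h⟩

theorem TopologicalSpace.NonemptyCompacts.isClosed_setOf_coe_subset {α : Type*}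
    [TopologicalSpace α] [T2Space α] :
    IsClosed {x : NonemptyCompacts α × NonemptyCompacts α | (x.1 : Set α) ⊆ x.2} := by
  simp_rw [SetLike.coe_subset_coe, ← sup_eq_right]
  exact isClosed_eq (continuous_fst.sup continuous_snd) continuous_snd

theorem IsCompact.isClosed_setOf_exists_subset {α : Type*} [TopologicalSpace α] [T2Space α]
    {C : Set (NonemptyCompacts α)} (hC : IsCompact C) :
    IsClosed {H : NonemptyCompacts α | ∃ P ∈ C, (P : Set α) ⊆ H} := by
  have : CompactSpace C := isCompact_iff_compactSpace.mp hC
  have hclosed :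
      IsClosed {x : C × NonemptyCompacts α | ((x.1 : NonemptyCompacts α) : Set α) ⊆ x.2} :=
    NonemptyCompacts.isClosed_setOf_coe_subset.preimage
      (continuous_subtype_val.prodMap continuous_id)
  convert isClosedMap_snd_of_compactSpace _ hclosed using 1
  ext H
  simp

theorem exists_setOf_sub_le_subset_thickening {X : Type*} [MetricSpace X] [CompactSpace X]
    {f : X → ℝ} (hf : Continuous f) (l : ℝ) {ε : ℝ} (hε : 0 < ε) :
    ∃ δ > 0, {x | l - δ ≤ f x} ⊆ thickening ε {x | l ≤ f x} := by
  set K := (thickening ε {x | l ≤ f x})ᶜ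
  rcases K.eq_empty_or_nonempty with hK | hK
  · exact ⟨1, one_pos, by simp [compl_empty_iff.mp hK]⟩
  obtain ⟨p, hpK, hmax⟩ :=
    isOpen_thickening.isClosed_compl.isCompact.exists_isMaxOn hK hf.continuousOn
  have hp : f p < l := lt_of_not_ge fun h => hpK (self_subset_thickening hε _ h)
  -- `f` stays below `f p < l` off the thickening, so any level above `f p` works.
  refine ⟨(l - f p) / 2, by linarith, fun x hx => ?_⟩
  by_contra hxK
  have hx : l - (l - f p) / 2 ≤ f x := hx
  have : f x ≤ f p := hmax hxK
  linarith

theorem exists_hausdorffDist_setOf_sub_le_lt {X : Type*} [MetricSpace X] [CompactSpace X]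
    {f : X → ℝ} (hf : Continuous f) (l : ℝ) {ε : ℝ} (hε : 0 < ε)
    (hne : {x | l ≤ f x}.Nonempty) :
    ∃ δ > 0, hausdorffDist {x | l ≤ f x} {x | l - δ ≤ f x} < ε := by
  obtain ⟨δ, hδ, hsub⟩ := exists_setOf_sub_le_subset_thickening hf l (half_pos hε)
  refine ⟨δ, hδ, (hausdorffDist_le_of_infDist (half_pos hε).le (fun x hx => ?_)
    fun y hy => ((mem_thickening_iff_infDist_lt hne).1 (hsub hy)).le).trans_lt
      (half_lt_self hε)⟩
  have hx : x ∈ {x | l - δ ≤ f x} := (sub_le_self l hδ.le).trans hx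
  exact (infDist_zero_of_mem hx).trans_le (half_pos hε).le

theorem stmt16_general {S : Type*} [Fintype S]
    (C : Set (TopologicalSpace.NonemptyCompacts (Dl S)))
    (hne : C.Nonempty) (hcomp : IsCompact C)
    (φ : S → ℝ) (l : ℝ) (hH : (halfSpace φ l).Nonempty) :
    (∃ H ∈ closure (hsColl C), (H : Set (Dl S)) = halfSpace φ l)
      ↔ l ≤ sSup ((fun P : TopologicalSpace.NonemptyCompacts (Dl S) =>
          sInf ((fun p : Dl S => expE p.1 φ) '' (P : Set (Dl S)))) '' C) := by
  constructor
  · rintro ⟨H, hHcl, hHeq⟩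
    obtain ⟨P, hPC, hPH⟩ : ∃ P ∈ C, (P : Set (Dl S)) ⊆ H :=
      closure_minimal (fun H hH => hH.2) hcomp.isClosed_setOf_exists_subset hHcl
    exact ((subset_halfSpace_iff_le_sInf P φ l).1 (hHeq ▸ hPH)).trans
      (le_csSup (bddAbove_image_sInf_expE C φ) ⟨P, hPC, rfl⟩)
  · intro hle
    refine ⟨halfSpaceNonemptyCompacts φ l hH, Metric.mem_closure_iff.2 fun ε hε => ?_, rfl⟩
    obtain ⟨δ, hδ, hdist⟩ :=
      exists_hausdorffDist_setOf_sub_le_lt (continuous_expE φ) l hε hH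
    obtain ⟨_, ⟨P, hPC, rfl⟩, hP⟩ :=
      exists_lt_of_lt_csSup (hne.image _) (show l - δ < _ by linarith)
    exact ⟨halfSpaceNonemptyCompacts φ (l - δ) (hH.mono (halfSpace_anti φ (by linarith))),
      ⟨⟨φ, l - δ, rfl⟩, P, hPC, (subset_halfSpace_iff_le_sInf P φ _).2 hP.le⟩, hdist⟩

/-- H_{φ,λ} lies in the half-space closure of 𝒫 iff
max_{P∈𝒫} min_{p∈P} E_p[φ] ≥ λ. -/
theorem stmt16 {S : Type*} [Fintype S] [Nonempty S]
    (C : Set (TopologicalSpace.NonemptyCompacts (Dl S)))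
    (hne : C.Nonempty) (hcomp : IsCompact C)
    (hmem : ∀ P ∈ C, Convex ℝ (Subtype.val '' (P : Set (Dl S))))
    (φ : S → ℝ) (l : ℝ) (hH : (halfSpace φ l).Nonempty) :
    (∃ H ∈ closure (hsColl C), (H : Set (Dl S)) = halfSpace φ l)
      ↔ l ≤ sSup ((fun P : TopologicalSpace.NonemptyCompacts (Dl S) =>
          sInf ((fun p : Dl S => expE p.1 φ) '' (P : Set (Dl S)))) '' C) :=
  stmt16_general C hne hcomp φ l hH
end
end

section
/- Let S be a finite nonempty set and let ℂ be a nonempty finite (or suitably compact) collection of functions c : Δ(S) → ℝ ∪ {+∞} with attained extrema. Define U : ℝ^S → ℝ by U(φ) = min{ max_{c∈ℂ} min_{p∈Δ(S)} (E_p[φ] + c(p)), min_{c∈ℂ} max_{p∈Δ(S)} (E_p[φ] − c(p)) }. Then U satisfies simple diversification: for all φ, ψ ∈ ℝ^S and κ ∈ ℝ, if U(φ) = U(ψ) and (1/2)φ + (1/2)ψ = κ·1, then κ ≥ U(φ). -/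
open Set

noncomputable section

section auxER

private lemma ER_FF (r : ℝ) (x : EReal) : (r : EReal) - ((r : EReal) - x) = x := by
  induction x using EReal.rec with
  | bot => simp
  | top => simp
  | coe a =>
      rw [← EReal.coe_sub, ← EReal.coe_sub]; norm_num

private lemma ER_anti (r : ℝ) {x y : EReal} (h : x ≤ y) :
    (r : EReal) - y ≤ (r : EReal) - x :=
  EReal.sub_le_sub le_rfl h

private lemma ER_sub_iInf {ι : Sort*} (r : ℝ) (g : ι → EReal) :
    (r : EReal) - (⨅ i, g i) = ⨆ i, ((r : EReal) - g i) := by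
  refine le_antisymm ?_ (iSup_le fun i => ER_anti r (iInf_le g i))
  have h1 : (r : EReal) - (⨆ i, ((r : EReal) - g i)) ≤ ⨅ i, g i := by
    refine le_iInf fun i => ?_
    have := ER_anti r (le_iSup (fun i => (r : EReal) - g i) i)
    rwa [ER_FF] at this
  have := ER_anti r h1
  rwa [ER_FF] at this

private lemma ER_sub_iSup {ι : Sort*} (r : ℝ) (g : ι → EReal) :
    (r : EReal) - (⨆ i, g i) = ⨅ i, ((r : EReal) - g i) := by
  refine le_antisymm (le_iInf fun i => ER_anti r (le_iSup g i)) ?_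
  have h1 : (⨆ i, g i) ≤ (r : EReal) - ⨅ i, ((r : EReal) - g i) := by
    refine iSup_le fun i => ?_
    have := ER_anti r (iInf_le (fun i => (r : EReal) - g i) i)
    rwa [ER_FF] at this
  have := ER_anti r h1
  rwa [ER_FF] at this

private lemma ER_add_eq_sub_sub {a b κ : ℝ} (hab : a + b = 2 * κ) (x : EReal) :
    (a : EReal) + x = ((2 * κ : ℝ) : EReal) - ((b : EReal) - x) := by
  induction x using EReal.rec with
  | bot => rw [EReal.coe_sub_bot, EReal.add_bot]; simp
  | top => rw [EReal.add_top_of_ne_bot (EReal.coe_ne_bot a), EReal.sub_top,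
      EReal.sub_bot (EReal.coe_ne_bot _)]
  | coe c =>
      rw [← EReal.coe_sub, ← EReal.coe_sub, ← EReal.coe_add, EReal.coe_eq_coe_iff]
      linarith

private lemma ER_sub_eq_sub_add {a b κ : ℝ} (hab : a + b = 2 * κ) (x : EReal) :
    (a : EReal) - x = ((2 * κ : ℝ) : EReal) - ((b : EReal) + x) := by
  induction x using EReal.rec with
  | bot => rw [EReal.coe_sub_bot, EReal.add_bot, EReal.sub_bot (EReal.coe_ne_bot _)]
  | top => rw [EReal.add_top_of_ne_bot (EReal.coe_ne_bot b), EReal.sub_top]; simp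
  | coe c =>
      rw [← EReal.coe_add, ← EReal.coe_sub, ← EReal.coe_sub, EReal.coe_eq_coe_iff]
      linarith

private lemma ER_sub_lt {κ : ℝ} {x : EReal} (h : (κ : EReal) < x) :
    ((2 * κ : ℝ) : EReal) - x < (κ : EReal) := by
  induction x using EReal.rec with
  | bot => exact absurd h (by simp)
  | top => simpa using EReal.bot_lt_coe κ
  | coe c =>
      rw [EReal.coe_lt_coe_iff] at h
      rw [← EReal.coe_sub, EReal.coe_lt_coe_iff]
      linarith

end auxER

/-- the variational cautious dual-self functional satisfies
simple diversification. -/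
theorem stmt19 {S : Type*} [Fintype S] [Nonempty S]
    (Cc : Set ((S → ℝ) → EReal)) (hne : Cc.Nonempty) (hfin : Cc.Finite)
    (hnb : ∀ c ∈ Cc, ∀ p, c p ≠ ⊥)
    (hnt : ∀ c ∈ Cc, ∃ p ∈ simplex S, c p ≠ ⊤)
    (φ ψ : S → ℝ) (κ : ℝ)
    (hU : min (⨆ c ∈ Cc, ⨅ p ∈ simplex S, ((expE p φ : EReal) + c p))
            (⨅ c ∈ Cc, ⨆ p ∈ simplex S, ((expE p φ : EReal) - c p))
        = min (⨆ c ∈ Cc, ⨅ p ∈ simplex S, ((expE p ψ : EReal) + c p))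
            (⨅ c ∈ Cc, ⨆ p ∈ simplex S, ((expE p ψ : EReal) - c p)))
    (hhedge : ∀ s, (1 / 2 : ℝ) * φ s + (1 / 2 : ℝ) * ψ s = κ) :
    min (⨆ c ∈ Cc, ⨅ p ∈ simplex S, ((expE p φ : EReal) + c p))
        (⨅ c ∈ Cc, ⨆ p ∈ simplex S, ((expE p φ : EReal) - c p))
      ≤ (κ : EReal) := by
  set A := ⨆ c ∈ Cc, ⨅ p ∈ simplex S, ((expE p φ : EReal) + c p) with hA
  set B := ⨅ c ∈ Cc, ⨆ p ∈ simplex S, ((expE p φ : EReal) - c p) with hB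
  have hexp : ∀ p ∈ simplex S, expE p ψ + expE p φ = 2 * κ := by
    intro p hp
    have hψ : ∀ s, ψ s = 2 * κ - φ s := by
      intro s; have := hhedge s; linarith
    have h1 : ∑ s, p s * ψ s = ∑ s, p s * (2 * κ - φ s) :=
      Finset.sum_congr rfl fun s _ => by rw [hψ]
    have h2 : ∑ s, p s * (2 * κ - φ s) = (2 * κ) * (∑ s, p s) - ∑ s, p s * φ s := by
      rw [Finset.mul_sum, ← Finset.sum_sub_distrib]
      exact Finset.sum_congr rfl fun s _ => by ring
    have hsum : ∑ s, p s = 1 := hp.2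
    unfold expE
    rw [h1, h2, hsum]; ring
  have hAψ : (⨆ c ∈ Cc, ⨅ p ∈ simplex S, ((expE p ψ : EReal) + c p))
      = ((2 * κ : ℝ) : EReal) - B := by
    rw [hB, ER_sub_iInf]
    refine iSup_congr fun c => ?_
    rw [ER_sub_iInf]
    refine iSup_congr fun hc => ?_
    rw [ER_sub_iSup]
    refine iInf_congr fun p => ?_
    rw [ER_sub_iSup]
    exact iInf_congr fun hp => ER_add_eq_sub_sub (hexp p hp) (c p)
  have hBψ : (⨅ c ∈ Cc, ⨆ p ∈ simplex S, ((expE p ψ : EReal) - c p))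
      = ((2 * κ : ℝ) : EReal) - A := by
    rw [hA, ER_sub_iSup]
    refine iInf_congr fun c => ?_
    rw [ER_sub_iSup]
    refine iInf_congr fun hc => ?_
    rw [ER_sub_iInf]
    refine iSup_congr fun p => ?_
    rw [ER_sub_iInf]
    exact iSup_congr fun hp => ER_sub_eq_sub_add (hexp p hp) (c p)
  rw [hAψ, hBψ] at hU
  by_contra hlt
  push_neg at hlt
  have hA' : (κ : EReal) < A := lt_of_lt_of_le hlt (min_le_left _ _)
  have hB' : (κ : EReal) < B := lt_of_lt_of_le hlt (min_le_right _ _)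
  have hlt2 : min (((2 * κ : ℝ) : EReal) - B) (((2 * κ : ℝ) : EReal) - A) < (κ : EReal) :=
    min_lt_iff.mpr (Or.inl (ER_sub_lt hB'))
  rw [← hU] at hlt2
  exact absurd hlt (not_lt.mpr hlt2.le)
end
end
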